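/- arXiv:2001.06557 — 9 statements merged into one kernel-verified Lean document; each statement's English description precedes it below -/
import Mathlib

section
/- Suppose G is a finite group with |G| = k², g^k = 1 for every g ∈ G, N is a subgroup of the center Z(G) with |N| = k, n : Fin k → N is a bijective enumeration of N with ∏_{ℓ=0}^{k-1} n(ℓ) = 1, and t : Fin k → G is an injective map whose image is a complete set of left coset representatives of N in G such that for every i, the ordered product ∏_{ℓ=0}^{k-1} (t(ℓ)·t(i)) = 1. Then setting ρ(m,ℓ) = t(ℓ)·n(m) (row labels) and γ(i,j) = n(j)·t(i) (column labels) yields a pandiagonal magic Cayley-sudoku table of G: (a) for every block index (m,i) ∈ Fin k × Fin k, the map (ℓ,j) ↦ ρ(m,ℓ)·γ(i,j) is a bijection from Fin k × Fin k to G; and (b) for every (m,i) and every j ∈ Fin k, the row product ∏_{ℓ=0}^{k-1} ρ(m,j)·γ(i,ℓ), the column product ∏_{ℓ=0}^{k-1} ρ(m,ℓ)·γ(i,j), the broken diagonal product ∏_{ℓ=0}^{k-1} ρ(m,ℓ)·γ(i,(j+ℓ) mod k), and the broken antidiagonal product ∏_{ℓ=0}^{k-1} ρ(m,ℓ)·γ(i,(j−ℓ)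 mod k) all equal 1 (all ordered products taken in increasing order of ℓ). -/
/-!
Since `N` is central and `Set.range t` is a left transversal of `N`, every element of `G` is
uniquely `t ℓ * n m`. The entry of block `(m, i)` at `(ℓ, j)` is `t ℓ * (n m * n j) * t i`, so a
block is this decomposition precomposed with a translation inside `N` and followed by a right
translation by `t i`, hence a bijection.

Central factors can be pulled out of an ordered product, so every line product splits as
`(n m) ^ k * ∏ n (c ℓ) * ∏ (t (r ℓ) * t i)`. The first factor is trivial by the exponent; the
second because `N` is abelian and the shifted or reflected index `c` permutes `Fin k` (or is
constant, and the exponent applies); the third by the hypothesis on `t` (or, for constant `r`,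
by the exponent).
-/

open Function Subgroup

section

variable {G : Type*} [Group G]

theorem List.prod_ofFn_mul_of_mem_center {k : ℕ} (z b : Fin k → G)
    (hz : ∀ ℓ, z ℓ ∈ center G) :
    (List.ofFn fun ℓ => z ℓ * b ℓ).prod = (List.ofFn z).prod * (List.ofFn b).prod := by
  induction k with
  | zero => simp
  | succ k ih =>
    have hcomm : b 0 * (List.ofFn fun ℓ => z ℓ.succ).prod
        = (List.ofFn fun ℓ => z ℓ.succ).prod * b 0 :=
      mem_center_iff.1 (list_prod_mem (by simpa using fun ℓ : Fin k => hz ℓ.succ)) (b 0)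
    simp only [List.ofFn_succ, List.prod_cons, ih _ _ fun ℓ => hz ℓ.succ]
    rw [mul_assoc (z 0), ← mul_assoc (b 0), hcomm]
    group

theorem List.prod_ofFn_comp_perm_of_mem_center {k : ℕ} (z : Fin k → G)
    (hz : ∀ ℓ, z ℓ ∈ center G) (σ : Equiv.Perm (Fin k)) :
    (List.ofFn (z ∘ σ)).prod = (List.ofFn z).prod := by
  refine (σ.ofFn_comp_perm z).prod_eq' (List.pairwise_of_forall_mem_list ?_)
  simp only [List.mem_ofFn, comp_apply]
  rintro _ ⟨ℓ, rfl⟩ _ ⟨ℓ', rfl⟩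
  exact mem_center_iff.1 (hz (σ ℓ')) (z (σ ℓ))

theorem mul_mul_mul_eq_of_mem_center {x y : G} (hx : x ∈ center G) (hy : y ∈ center G)
    (a b : G) : (a * x) * (y * b) = (x * y) * (a * b) := by
  rw [mem_center_iff.1 hx a, mul_assoc, ← mul_assoc a, mem_center_iff.1 hy a]
  group

theorem List.prod_ofFn_mul_mul_mul_eq_one {k : ℕ} {z c : G} {a x : Fin k → G}
    (hz : z ∈ center G) (hzk : z ^ k = 1) (hx : ∀ ℓ, x ℓ ∈ center G)
    (hxprod : (List.ofFn x).prod = 1) (haprod : (List.ofFn fun ℓ => a ℓ * c).prod = 1) :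
    (List.ofFn fun ℓ => (a ℓ * z) * (x ℓ * c)).prod = 1 := by
  have hzx : ∀ ℓ, z * x ℓ ∈ center G := fun ℓ => mul_mem hz (hx ℓ)
  simp only [mul_mul_mul_eq_of_mem_center hz (hx _)]
  rw [prod_ofFn_mul_of_mem_center _ _ hzx, prod_ofFn_mul_of_mem_center _ _ fun _ => hz,
    hxprod, haprod, ofFn_const, prod_replicate, hzk, one_mul, one_mul]

theorem isComplement_range_of_existsUnique {ι : Type*} {H : Subgroup G} {t : ι → G}
    (hreps : ∀ g : G, ∃! x, x ∈ Set.range t ∧ g⁻¹ * x ∈ H) :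
    IsComplement (Set.range t) H := by
  rw [isComplement_iff_existsUnique_inv_mul_mem]
  intro g
  obtain ⟨x, ⟨hx, hgx⟩, huniq⟩ := hreps g
  refine ⟨⟨x, hx⟩, by simpa using H.inv_mem hgx, fun s hs => Subtype.ext ?_⟩
  exact huniq s ⟨s.2, by simpa using H.inv_mem hs⟩

theorem bijective_mul_of_existsUnique {ι κ : Type*} {H : Subgroup G} {t : ι → G}
    (ht : Injective t) (hreps : ∀ g : G, ∃! x, x ∈ Set.range t ∧ g⁻¹ * x ∈ H)
    {n : κ → H} (hn : Bijective n) :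
    Bijective fun p : ι × κ => t p.1 * (n p.2 : G) :=
  (isComplement_range_of_existsUnique hreps).comp
    ((Equiv.ofInjective t ht).bijective.prodMap hn)

end

theorem magic_cayley_sudoku_construction_general {G : Type*} [Group G] {k : ℕ}
    (hexp : ∀ g : G, g ^ k = 1)
    (N : Subgroup G) (hN : N ≤ Subgroup.center G)
    (n : Fin k → N) (hn : Function.Bijective n)
    (hnprod : (List.ofFn fun ℓ : Fin k => (n ℓ : G)).prod = 1)
    (t : Fin k → G) (htinj : Function.Injective t)
    (hreps : ∀ g : G, ∃! x, x ∈ Set.range t ∧ g⁻¹ * x ∈ N)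
    (htprod : ∀ i : Fin k, (List.ofFn fun ℓ : Fin k => t ℓ * t i).prod = 1) :
    -- the row labels and the column labels are bijective
    Function.Bijective (fun p : Fin k × Fin k => t p.2 * (n p.1 : G)) ∧
    Function.Bijective (fun p : Fin k × Fin k => (n p.2 : G) * t p.1) ∧
    -- (a) each block contains every element of `G` exactly once
    (∀ m i : Fin k,
      Function.Bijective
        (fun p : Fin k × Fin k => (t p.1 * (n m : G)) * ((n p.2 : G) * t i))) ∧
    -- (b) all row, column, broken diagonal and broken antidiagonal products are trivial
    (∀ m i j : Fin k,
      (List.ofFn fun ℓ : Fin k => (t j * (n m : G)) * ((n ℓ : G) * t i)).prod = 1 ∧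
      (List.ofFn fun ℓ : Fin k => (t ℓ * (n m : G)) * ((n j : G) * t i)).prod = 1 ∧
      (List.ofFn fun ℓ : Fin k => (t ℓ * (n m : G)) * ((n (j + ℓ) : G) * t i)).prod = 1 ∧
      (List.ofFn fun ℓ : Fin k => (t ℓ * (n m : G)) * ((n (j - ℓ) : G) * t i)).prod = 1) := by
  have hcentral : ∀ ℓ, (n ℓ : G) ∈ center G := fun ℓ => hN (n ℓ).2
  have hlabel := bijective_mul_of_existsUnique htinj hreps hn
  refine ⟨hlabel.comp Prod.swap_bijective, ?_, fun m i => ?_, fun m i j => ?_⟩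
  · convert hlabel using 2 with p
    exact (mem_center_iff.1 (hcentral p.2) (t p.1)).symm
  · have hshift : Bijective fun ℓ => n m * n ℓ := (Group.mulLeft_bijective (n m)).comp hn
    convert (Group.mulRight_bijective (t i)).comp
      (bijective_mul_of_existsUnique htinj hreps hshift) using 2 with p
    simp [mul_assoc]
  · have : NeZero k := NeZero.of_pos j.pos
    have hshifted (σ : Equiv.Perm (Fin k)) : (List.ofFn fun ℓ => (n (σ ℓ) : G)).prod = 1 :=
      (List.prod_ofFn_comp_perm_of_mem_center _ hcentral σ).trans hnprod
    have hconst (g : G) : (List.ofFn fun _ : Fin k => g).prod = 1 := by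
      rw [List.ofFn_const, List.prod_replicate, hexp]
    exact ⟨List.prod_ofFn_mul_mul_mul_eq_one (hcentral m) (hexp _) hcentral hnprod (hconst _),
      List.prod_ofFn_mul_mul_mul_eq_one (hcentral m) (hexp _) (fun _ => hcentral j) (hconst _)
        (htprod i),
      List.prod_ofFn_mul_mul_mul_eq_one (hcentral m) (hexp _) (fun _ => hcentral _)
        (hshifted (Equiv.addLeft j)) (htprod i),
      List.prod_ofFn_mul_mul_mul_eq_one (hcentral m) (hexp _) (fun _ => hcentral _)
        (hshifted (Equiv.subLeft j)) (htprod i)⟩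

/-- The magic Cayley-sudoku construction (Theorem: Magic Cayley-Sudoku Construction).
Row labels `ρ (m, ℓ) = t ℓ * n m`, column labels `γ (i, j) = n j * t i`. -/
theorem magic_cayley_sudoku_construction {G : Type*} [Group G] [Finite G] {k : ℕ}
    (hcard : Nat.card G = k ^ 2)
    (hexp : ∀ g : G, g ^ k = 1)
    (N : Subgroup G) (hN : N ≤ Subgroup.center G) (hNcard : Nat.card N = k)
    (n : Fin k → N) (hn : Function.Bijective n)
    (hnprod : (List.ofFn fun ℓ : Fin k => (n ℓ : G)).prod = 1)
    (t : Fin k → G) (htinj : Function.Injective t)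
    (hreps : ∀ g : G, ∃! x, x ∈ Set.range t ∧ g⁻¹ * x ∈ N)
    (htprod : ∀ i : Fin k, (List.ofFn fun ℓ : Fin k => t ℓ * t i).prod = 1) :
    -- the row labels and the column labels are bijective
    Function.Bijective (fun p : Fin k × Fin k => t p.2 * (n p.1 : G)) ∧
    Function.Bijective (fun p : Fin k × Fin k => (n p.2 : G) * t p.1) ∧
    -- (a) each block contains every element of `G` exactly once
    (∀ m i : Fin k,
      Function.Bijective
        (fun p : Fin k × Fin k => (t p.1 * (n m : G)) * ((n p.2 : G) * t i))) ∧
    -- (b) all row, column, broken diagonal and broken antidiagonal products are trivial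
    (∀ m i j : Fin k,
      (List.ofFn fun ℓ : Fin k => (t j * (n m : G)) * ((n ℓ : G) * t i)).prod = 1 ∧
      (List.ofFn fun ℓ : Fin k => (t ℓ * (n m : G)) * ((n j : G) * t i)).prod = 1 ∧
      (List.ofFn fun ℓ : Fin k => (t ℓ * (n m : G)) * ((n (j + ℓ) : G) * t i)).prod = 1 ∧
      (List.ofFn fun ℓ : Fin k => (t ℓ * (n m : G)) * ((n (j - ℓ) : G) * t i)).prod = 1) :=
  magic_cayley_sudoku_construction_general hexp N hN n hn hnprod t htinj hreps htprod
end

section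
/- Suppose G is a finite group with g^k = 1 for every g ∈ G, N is a subgroup of the center Z(G), n : Fin k → N is a bijective enumeration of N with ∏_{ℓ=0}^{k-1} n(ℓ) = 1, and t : Fin k → G satisfies ∏_{ℓ=0}^{k-1} (t(ℓ)·t_i) = 1 for a given element t_i ∈ G. Then for every m, j ∈ Fin k, the ordered broken diagonal product ∏_{ℓ=0}^{k-1} (t(ℓ)·n(m))·(n((j+ℓ) mod k)·t_i) equals 1. -/
/-! Since `N` is central, each factor rearranges to `(t ℓ * ti) * (n m * n (j + ℓ))`, and central
factors can be pulled out of an ordered product. This leaves `∏ ℓ, (t ℓ * ti) = 1` times a product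
in the abelian group `Z(G)`, which is `n m ^ k = 1` times a cyclic reindexing of `∏ ℓ, n ℓ = 1`. -/

open Subgroup Finset
open scoped IsMulCommutative

theorem List.prod_ofFn_mul_of_mem_center_s6 {M : Type*} [Monoid M] {k : ℕ} (f g : Fin k → M)
    (hg : ∀ i, g i ∈ Set.center M) :
    (List.ofFn fun i => f i * g i).prod = (List.ofFn f).prod * (List.ofFn g).prod := by
  induction k with
  | zero => simp
  | succ k ih =>
    simp only [List.ofFn_succ, List.prod_cons, ih (fun i => f i.succ) (fun i => g i.succ)
      (fun i => hg i.succ)]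
    rw [mul_assoc, ← mul_assoc (g 0), (Semigroup.mem_center_iff.mp (hg 0) _).symm]
    simp only [mul_assoc]

theorem Subgroup.list_prod_ofFn_coe_center {G : Type*} [Group G] {k : ℕ} (c : Fin k → center G) :
    (List.ofFn fun i => (c i : G)).prod = ↑(∏ i, c i) := by
  rw [← List.prod_ofFn, val_list_prod, List.map_ofFn]
  rfl

theorem magic_broken_diagonal_product_general {G : Type*} [Group G] {k : ℕ}
    (hexp : ∀ g : G, g ^ k = 1)
    (N : Subgroup G) (hN : N ≤ Subgroup.center G)
    (n : Fin k → N)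
    (hnprod : (List.ofFn fun ℓ : Fin k => (n ℓ : G)).prod = 1)
    (t : Fin k → G) (ti : G)
    (htprod : (List.ofFn fun ℓ : Fin k => t ℓ * ti).prod = 1)
    (m j : Fin k) :
    (List.ofFn fun ℓ : Fin k => (t ℓ * (n m : G)) * ((n (j + ℓ) : G) * ti)).prod = 1 := by
  have : NeZero k := NeZero.of_pos m.pos
  let ν : Fin k → center G := fun ℓ => inclusion hN (n ℓ)
  have hν : ∏ ℓ, ν ℓ = 1 := Subtype.ext <| (list_prod_ofFn_coe_center ν).symm.trans hnprod
  have hdiag : ∏ ℓ, ν m * ν (j + ℓ) = 1 := by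
    have hνk : ν m ^ k = 1 := Subtype.ext <| (SubmonoidClass.coe_pow _ _).trans (hexp _)
    rw [prod_mul_distrib, prod_const, card_univ, Fintype.card_fin, hνk, one_mul]
    exact (Equiv.prod_comp (Equiv.addLeft j) ν).trans hν
  have hterm : ∀ ℓ, t ℓ * n m * (n (j + ℓ) * ti) = t ℓ * ti * ↑(ν m * ν (j + ℓ)) := fun ℓ => by
    have hcomm := mem_center_iff.mp (ν m * ν (j + ℓ)).2 ti
    simp only [Subgroup.coe_mul, ν, coe_inclusion] at hcomm ⊢
    rw [mul_assoc (t ℓ) ti, hcomm]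
    group
  calc (List.ofFn fun ℓ => t ℓ * n m * (n (j + ℓ) * ti)).prod
      = (List.ofFn fun ℓ => t ℓ * ti * ↑(ν m * ν (j + ℓ))).prod := by simp only [hterm]
    _ = (List.ofFn fun ℓ => t ℓ * ti).prod * ↑(∏ ℓ, ν m * ν (j + ℓ)) := by
      rw [List.prod_ofFn_mul_of_mem_center_s6 _ _ fun ℓ => (ν m * ν (j + ℓ)).2,
        list_prod_ofFn_coe_center]
    _ = 1 := by rw [htprod, hdiag, one_mul, OneMemClass.coe_one]

/-- Broken diagonal products in a block of the magic Cayley-sudoku construction are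
trivial; the index `j + ℓ` is computed modulo `k` (addition in `Fin k`). -/
theorem magic_broken_diagonal_product {G : Type*} [Group G] [Finite G] {k : ℕ}
    (hexp : ∀ g : G, g ^ k = 1)
    (N : Subgroup G) (hN : N ≤ Subgroup.center G)
    (n : Fin k → N) (hn : Function.Bijective n)
    (hnprod : (List.ofFn fun ℓ : Fin k => (n ℓ : G)).prod = 1)
    (t : Fin k → G) (ti : G)
    (htprod : (List.ofFn fun ℓ : Fin k => t ℓ * ti).prod = 1)
    (m j : Fin k) :
    (List.ofFn fun ℓ : Fin k => (t ℓ * (n m : G)) * ((n (j + ℓ) : G) * ti)).prod = 1 :=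
  magic_broken_diagonal_product_general hexp N hN n hnprod t ti htprod m j
end

section
/- Suppose G is a finite group with g^k = 1 for every g ∈ G, N is a subgroup of the center Z(G), n : Fin k → N is a bijective enumeration of N with ∏_{ℓ=0}^{k-1} n(ℓ) = 1, and t : Fin k → G satisfies ∏_{ℓ=0}^{k-1} (t(ℓ)·t_i) = 1 for every element t_i in the image of t. Then for every m, j ∈ Fin k and every i ∈ Fin k, the left-to-right broken diagonal product ∏_{ℓ=0}^{k-1} (t((ℓ−j) mod k)·n(m))·(n(ℓ)·t(i)) equals 1; that is, calculating broken diagonal products left to right gives the same trivial result as top to bottom. -/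
/-!
Since `N` is central, each factor regroups as `(t (ℓ - j) * t i) * (n m * n ℓ)`, and central
factors can be pulled out of an ordered product. The product then splits into
`∏ ℓ, t (ℓ - j) * t i`, a cyclic rotation of `∏ ℓ, t ℓ * t i = 1`, times
`n m ^ k * ∏ ℓ, n ℓ = 1 * 1`.
-/

namespace List

theorem prod_map_mul_of_mem_center {ι M : Type*} [Monoid M] {f g : ι → M} :
    ∀ {l : List ι}, (∀ a ∈ l, g a ∈ Submonoid.center M) →
      (l.map fun a => f a * g a).prod = (l.map f).prod * (l.map g).prod
  | [], _ => by simp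
  | a :: l, hg => by
    have hga := Submonoid.mem_center_iff.mp (hg a mem_cons_self)
    rw [map_cons, map_cons, map_cons, prod_cons, prod_cons, prod_cons,
      prod_map_mul_of_mem_center fun b hb => hg b (mem_cons_of_mem a hb), mul_assoc, mul_assoc,
      ← mul_assoc (g a), ← hga, mul_assoc]

theorem prod_ofFn_mul_of_mem_center_s8 {M : Type*} [Monoid M] {k : ℕ} {f g : Fin k → M}
    (hg : ∀ ℓ, g ℓ ∈ Submonoid.center M) :
    (ofFn fun ℓ => f ℓ * g ℓ).prod = (ofFn f).prod * (ofFn g).prod := by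
  simp only [ofFn_eq_map]
  exact prod_map_mul_of_mem_center fun ℓ _ => hg ℓ

theorem ofFn_comp_sub_eq_rotate {α : Type*} {k : ℕ} (f : Fin k → α) (j : Fin k) :
    (ofFn fun ℓ => f (ℓ - j)) = (ofFn f).rotate (-j : Fin k) := by
  refine ext_getElem (by simp) fun ℓ _ _ => ?_
  simp only [List.getElem_ofFn, getElem_rotate, length_ofFn]
  congr 1
  ext
  simp [Fin.sub_def, Fin.neg_def, Nat.add_comm]

theorem prod_ofFn_comp_sub_eq_one {M : Type*} [Group M] {k : ℕ} {f : Fin k → M}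
    (hf : (ofFn f).prod = 1) (j : Fin k) : (ofFn fun ℓ => f (ℓ - j)).prod = 1 := by
  rw [ofFn_comp_sub_eq_rotate]
  exact prod_rotate_eq_one_of_prod_eq_one hf _

end List

theorem magic_left_to_right_broken_diagonal_product_general {G : Type*} [Group G]
    {k : ℕ}
    (hexp : ∀ g : G, g ^ k = 1)
    (N : Subgroup G) (hN : N ≤ Subgroup.center G)
    (n : Fin k → N)
    (hnprod : (List.ofFn fun ℓ : Fin k => (n ℓ : G)).prod = 1)
    (t : Fin k → G)
    (htprod : ∀ x ∈ Set.range t, (List.ofFn fun ℓ : Fin k => t ℓ * x).prod = 1)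
    (m j i : Fin k) :
    (List.ofFn fun ℓ : Fin k => (t (ℓ - j) * (n m : G)) * ((n ℓ : G) * t i)).prod = 1 := by
  have hcent (ℓ : Fin k) : (n ℓ : G) ∈ Submonoid.center G := hN (n ℓ).2
  have hregroup (ℓ : Fin k) :
      (t (ℓ - j) * (n m : G)) * ((n ℓ : G) * t i) = (t (ℓ - j) * t i) * ((n m : G) * n ℓ) := by
    have hc := Submonoid.mem_center_iff.mp (Submonoid.mul_mem _ (hcent m) (hcent ℓ))
    simp only [mul_assoc, ← mul_assoc (n m : G), ← hc]
  have htrot : (List.ofFn fun ℓ => t (ℓ - j) * t i).prod = 1 :=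
    List.prod_ofFn_comp_sub_eq_one (htprod (t i) ⟨i, rfl⟩) j
  have hnpow : (List.ofFn fun ℓ => (n m : G) * n ℓ).prod = 1 := by
    rw [List.prod_ofFn_mul_of_mem_center_s8 hcent, hnprod, List.ofFn_const, List.prod_replicate,
      hexp, mul_one]
  rw [funext hregroup, List.prod_ofFn_mul_of_mem_center_s8 fun ℓ =>
    Submonoid.mul_mem _ (hcent m) (hcent ℓ), htrot, hnpow, mul_one]

/-- Left-to-right broken diagonal products in a block of the magic Cayley-sudoku
construction are trivial; the index `ℓ - j` is computed modulo `k` (in `Fin k`). -/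
theorem magic_left_to_right_broken_diagonal_product {G : Type*} [Group G] [Finite G]
    {k : ℕ}
    (hexp : ∀ g : G, g ^ k = 1)
    (N : Subgroup G) (hN : N ≤ Subgroup.center G)
    (n : Fin k → N) (hn : Function.Bijective n)
    (hnprod : (List.ofFn fun ℓ : Fin k => (n ℓ : G)).prod = 1)
    (t : Fin k → G)
    (htprod : ∀ x ∈ Set.range t, (List.ofFn fun ℓ : Fin k => t ℓ * x).prod = 1)
    (m j i : Fin k) :
    (List.ofFn fun ℓ : Fin k => (t (ℓ - j) * (n m : G)) * ((n ℓ : G) * t i)).prod = 1 :=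
  magic_left_to_right_broken_diagonal_product_general hexp N hN n hnprod t htprod m j i
end

section
/- Suppose G is a finite abelian group with |G| = k², g^k = 1 for every g ∈ G, N is a subgroup of G with |N| = k, the product of all elements of N equals 1, and the product of all elements of the quotient group G/N equals the identity coset N. Then there exists a map t : Fin k → G whose image is a complete set of left coset representatives of N in G such that ∏_{ℓ=0}^{k-1} t(ℓ) = 1 and, for every i ∈ Fin k, ∏_{ℓ=0}^{k-1} (t(ℓ)·t(i)) = 1. -/
/-!
Let `f` be any right inverse of `G → G ⧸ N`. Since `∏ q = 1` in `G ⧸ N`, the product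
`P = ∏ q, f q` lies in `N`, so multiplying the representative of the trivial coset by `P⁻¹`
gives a transversal whose product is `1`. Index it by `Fin k` through `Fin k ≃ G ⧸ N`
(the quotient has `k² / k = k` elements). Then
`∏ ℓ, t ℓ * t i = (∏ ℓ, t ℓ) * t i ^ k = 1`, since `G` has exponent dividing `k`.
-/

open Finset

namespace Subgroup

variable {G : Type*}

theorem IsComplement.existsUnique_mem_inv_mul_mem [Group G] {S : Set G} {H : Subgroup G}
    (h : IsComplement S H) (g : G) : ∃! x, x ∈ S ∧ g⁻¹ * x ∈ H := by
  obtain ⟨⟨x, hxS⟩, hxg, hx_unique⟩ := isComplement_iff_existsUnique_inv_mul_mem.mp h g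
  refine ⟨x, ⟨hxS, by simpa using H.inv_mem hxg⟩, fun y ⟨hyS, hyg⟩ => ?_⟩
  exact congrArg Subtype.val (hx_unique ⟨y, hyS⟩ (by simpa using H.inv_mem hyg))

theorem exists_rightInverse_mk_prod_eq_one [CommGroup G] (H : Subgroup G) [Fintype (G ⧸ H)]
    (h : ∏ q : G ⧸ H, q = 1) :
    ∃ f : G ⧸ H → G, (∀ q, (f q : G ⧸ H) = q) ∧ ∏ q, f q = 1 := by
  classical
  set P := ∏ q : G ⧸ H, q.out
  have hP : P ∈ H := by
    rw [← QuotientGroup.eq_one_iff, QuotientGroup.mk_prod]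
    simpa using h
  let c : G ⧸ H → G := Pi.mulSingle 1 P⁻¹
  refine ⟨fun q => q.out * c q, fun q => ?_, ?_⟩
  · have hcorr : c q ∈ H := by
      by_cases hq : q = 1 <;> simp [c, hq, hP]
    rw [QuotientGroup.mk_mul, (QuotientGroup.eq_one_iff _).mpr hcorr, mul_one,
      QuotientGroup.out_eq']
  · rw [prod_mul_distrib, Fintype.prod_pi_mulSingle', mul_inv_cancel]

end Subgroup

theorem abelian_magic_coset_reps_general {G : Type*} [CommGroup G] [Fintype G] {k : ℕ}
    (hcard : Fintype.card G = k ^ 2)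
    (hexp : ∀ g : G, g ^ k = 1)
    (N : Subgroup G) [Fintype N] [Fintype (G ⧸ N)]
    (hNcard : Fintype.card N = k)
    (hQprod : ∏ x : G ⧸ N, x = 1) :
    ∃ t : Fin k → G,
      (∀ g : G, ∃! x, x ∈ Set.range t ∧ g⁻¹ * x ∈ N) ∧
      (∏ ℓ : Fin k, t ℓ) = 1 ∧
      ∀ i : Fin k, (∏ ℓ : Fin k, t ℓ * t i) = 1 := by
  have hQcard : Fintype.card (G ⧸ N) = k := by
    have hk : 0 < k := Nat.pos_of_ne_zero fun hk =>
      (Fintype.card_pos (α := G)).ne' (by simp [hcard, hk])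
    have h := N.card_eq_card_quotient_mul_card_subgroup
    simp only [Nat.card_eq_fintype_card, hcard, hNcard] at h
    exact Nat.eq_of_mul_eq_mul_right hk (by rw [← h, sq])
  obtain ⟨e⟩ : Nonempty (Fin k ≃ G ⧸ N) := Fintype.card_eq.mp (by simp [hQcard])
  obtain ⟨f, hf, hf_prod⟩ := N.exists_rightInverse_mk_prod_eq_one hQprod
  have ht_prod : ∏ ℓ, f (e ℓ) = 1 := by rw [e.prod_comp f, hf_prod]
  refine ⟨f ∘ e, fun g => ?_, ht_prod, fun i => ?_⟩
  · rw [e.surjective.range_comp f]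
    exact (Subgroup.isComplement_range_left hf).existsUnique_mem_inv_mul_mem g
  · simp only [Function.comp_apply]
    rw [prod_mul_distrib, ht_prod, prod_const, card_univ, Fintype.card_fin, hexp, mul_one]

/-- Theorem (Abelian Groups): the hypotheses of the magic Cayley-sudoku construction
can be realized in a suitable abelian group. -/
theorem abelian_magic_coset_reps {G : Type*} [CommGroup G] [Fintype G] {k : ℕ}
    (hcard : Fintype.card G = k ^ 2)
    (hexp : ∀ g : G, g ^ k = 1)
    (N : Subgroup G) [Fintype N] [Fintype (G ⧸ N)]
    (hNcard : Fintype.card N = k)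
    (hNprod : ∏ x : N, (x : G) = 1)
    (hQprod : ∏ x : G ⧸ N, x = 1) :
    ∃ t : Fin k → G,
      (∀ g : G, ∃! x, x ∈ Set.range t ∧ g⁻¹ * x ∈ N) ∧
      (∏ ℓ : Fin k, t ℓ) = 1 ∧
      ∀ i : Fin k, (∏ ℓ : Fin k, t ℓ * t i) = 1 :=
  abelian_magic_coset_reps_general hcard hexp N hNcard hQprod
end

section
/- There is no magic Cayley-sudoku table for ℤ₉ (the integers mod 9 under addition). That is, there do not exist bijections ρ : Fin 3 × Fin 3 → ℤ₉ (row labels) and γ : Fin 3 × Fin 3 → ℤ₉ (column labels) such that for every block index (m,i) ∈ Fin 3 × Fin 3: the map (ℓ,j) ↦ ρ(m,ℓ) + γ(i,j) is a bijection from Fin 3 × Fin 3 to ℤ₉, and for every j ∈ Fin 3 the row sum ∑_{ℓ=0}^{2} (ρ(m,j) + γ(i,ℓ)) = 0, the column sum ∑_{ℓ=0}^{2} (ρ(m,ℓ) + γ(i,j)) = 0, the main diagonal sum ∑_{ℓ=0}^{2} (ρ(m,ℓ) + γ(i,ℓ)) = 0, and the main antidiagonal sum ∑_{ℓ=0}^{2}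 (ρ(m,ℓ) + γ(i,2−ℓ)) = 0 in ℤ₉. -/
/-! Each row sum of the block `(m, 0)` reads `k • ρ (m, j) + ∑ ℓ, γ (0, ℓ) = 0`, so `k • ρ (m, j)`
does not depend on the cell. As `ρ` is onto, `k • g` is then the same (namely `0`) for every `g`,
that is, the exponent of the group divides `k`. For `ℤ₉` and `k = 3` this fails at `g = 1`. -/

theorem nsmul_eq_zero_of_forall_sum_add_eq_zero {α G : Type*} [AddCommMonoid G] {k : ℕ}
    {ρ : α → G} (hρ : Function.Surjective ρ) {f : Fin k → G}
    (hsum : ∀ a, ∑ ℓ : Fin k, (ρ a + f ℓ) = 0) (g : G) : k • g = 0 := by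
  have hk : ∀ a, k • ρ a + ∑ ℓ, f ℓ = 0 := fun a => by
    simpa [Finset.sum_add_distrib] using hsum a
  obtain ⟨a₀, ha₀⟩ := hρ 0
  obtain ⟨a, rfl⟩ := hρ g
  have hf : ∑ ℓ, f ℓ = 0 := by simpa [ha₀] using hk a₀
  simpa [hf] using hk a

/-- There is no magic Cayley-sudoku table for `ℤ₉`. -/
theorem no_magic_cayley_sudoku_Z9 :
    ¬ ∃ (ρ γ : Fin 3 × Fin 3 → ZMod 9),
        Function.Bijective ρ ∧ Function.Bijective γ ∧
        ∀ m i : Fin 3,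
          Function.Bijective (fun p : Fin 3 × Fin 3 => ρ (m, p.1) + γ (i, p.2)) ∧
          ∀ j : Fin 3,
            (∑ ℓ : Fin 3, (ρ (m, j) + γ (i, ℓ))) = 0 ∧
            (∑ ℓ : Fin 3, (ρ (m, ℓ) + γ (i, j))) = 0 ∧
            (∑ ℓ : Fin 3, (ρ (m, ℓ) + γ (i, ℓ))) = 0 ∧
            (∑ ℓ : Fin 3, (ρ (m, ℓ) + γ (i, 2 - ℓ))) = 0 := by
  rintro ⟨ρ, γ, hρ, -, h⟩
  have hrow : ∀ p : Fin 3 × Fin 3, ∑ ℓ : Fin 3, (ρ p + γ (0, ℓ)) = 0 :=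
    fun p => ((h p.1 0).2 p.2).1
  have h3 : (3 : ℕ) • (1 : ZMod 9) = 0 :=
    nsmul_eq_zero_of_forall_sum_add_eq_zero hρ.2 hrow 1
  exact absurd h3 (by decide)
end

section
/- There is no magic Cayley-sudoku table for ℤ₂ × ℤ₂ (with componentwise addition mod 2). That is, there do not exist bijections ρ : Fin 2 × Fin 2 → ℤ₂ × ℤ₂ (row labels) and γ : Fin 2 × Fin 2 → ℤ₂ × ℤ₂ (column labels) such that for every block index (m,i) ∈ Fin 2 × Fin 2: the map (ℓ,j) ↦ ρ(m,ℓ) + γ(i,j) is a bijection from Fin 2 × Fin 2 to ℤ₂ × ℤ₂, and for every j ∈ Fin 2 the row sum ∑_{ℓ=0}^{1} (ρ(m,j) + γ(i,ℓ)) = 0, the column sum ∑_{ℓ=0}^{1} (ρ(m,ℓ) + γ(i,j)) = 0, the main diagonal sum ∑_{ℓ=0}^{1} (ρ(m,ℓ) + γ(i,ℓ)) = 0, and the main antidiagonal sum ∑_{ℓ=0}^{1} (ρ(m,ℓ) + γ(i,1−ℓ)) = 0 in ℤ₂ × ℤ₂. -/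
theorem CharTwo.sum_fin_two_add_eq_zero_iff {R : Type*} [Ring R] [CharP R 2] (a : R)
    (c : Fin 2 → R) : ∑ ℓ, (a + c ℓ) = 0 ↔ c 0 = c 1 := by
  rw [Fin.sum_univ_two, add_add_add_comm, CharTwo.add_self_eq_zero, zero_add,
    CharTwo.add_eq_zero]

/-- There is no magic Cayley-sudoku table for `ℤ₂ × ℤ₂`. -/
theorem no_magic_cayley_sudoku_Z2xZ2 :
    ¬ ∃ (ρ γ : Fin 2 × Fin 2 → ZMod 2 × ZMod 2),
        Function.Bijective ρ ∧ Function.Bijective γ ∧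
        ∀ m i : Fin 2,
          Function.Bijective (fun p : Fin 2 × Fin 2 => ρ (m, p.1) + γ (i, p.2)) ∧
          ∀ j : Fin 2,
            (∑ ℓ : Fin 2, (ρ (m, j) + γ (i, ℓ))) = 0 ∧
            (∑ ℓ : Fin 2, (ρ (m, ℓ) + γ (i, j))) = 0 ∧
            (∑ ℓ : Fin 2, (ρ (m, ℓ) + γ (i, ℓ))) = 0 ∧
            (∑ ℓ : Fin 2, (ρ (m, ℓ) + γ (i, 1 - ℓ))) = 0 := by
  rintro ⟨ρ, γ, -, hγ, h⟩
  have hγ_eq : γ (0, 0) = γ (0, 1) :=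
    (CharTwo.sum_fin_two_add_eq_zero_iff (ρ (0, 0)) fun ℓ => γ (0, ℓ)).1 ((h 0 0).2 0).1
  exact absurd (hγ.1 hγ_eq) (by decide)
end

section
/- Let H be any finite group with |H| = n, and let G = H × H × ℤₙ × ℤₙ (where ℤₙ is the cyclic group of integers mod n). Then H is isomorphic to a subgroup of G, and G admits a pandiagonal magic Cayley-sudoku table with k = n²; that is, there exist bijective row labels ρ : Fin k × Fin k → G and bijective column labels γ : Fin k × Fin k → G such that for every block index (m,i) ∈ Fin k × Fin k, the map (ℓ,j) ↦ ρ(m,ℓ)·γ(i,j) is a bijection from Fin k × Fin k to G, and for every j ∈ Fin k the ordered row product ∏_{ℓ=0}^{k−1} ρ(m,j)·γ(i,ℓ), column product ∏_{ℓ=0}^{k−1} ρ(m,ℓ)·γ(i,j), broken diagonal product ∏_{ℓ=0}^{k−1} ρ(m,ℓ)·γ(i,(j+ℓ) mod k), and broken antidiagonal product ∏_{ℓ=0}^{k−1} ρ(m,ℓ)·γ(i,(j−ℓ) mod k) all equal the identity of G. In particular, every finite group is isomorphic to a subgroup of a finite group having a pandiagonal magic Cayley-sudoku table. -/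
/-!
Write `x : Fin (n²)` in base `n` and send its low digit into `H` (a bijection, as `|H| = n`)
and its high digit into `ℤₙ`. Row `(m, ℓ)` is labelled by `(ℓ₀, m₀, ℓ₁, m₁)` and column `(i, j)`
by `(i₀, j₀, i₁, j₁)`. Block `(m, i)` is then a two-sided translate of the bijective labelling
`(ℓ, j) ↦ (ℓ₀, j₀, ℓ₁, j₁)`. Along a row, column or broken (anti)diagonal the `H`-coordinates
depend only on `ℓ mod n`, because the low digit of `j ± ℓ` is `j₀ ± ℓ₀`; so their ordered product
is an `n`-th power, which is `1` in `H`. The `ℤₙ`-coordinates add up either a constant `n²` times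
or the high digits of all of `Fin (n²)`, in which every digit occurs `n` times; both sums vanish.
-/

namespace Fin

variable {m n : ℕ}

lemma modNat_add (a b : Fin (m * n)) : (a + b).modNat = a.modNat + b.modNat := by
  ext
  simp [modNat, val_add, Nat.mod_mod_of_dvd _ (Dvd.intro_left m rfl), Nat.add_mod]

lemma modNat_sub [NeZero m] [NeZero n] (a b : Fin (m * n)) :
    (a - b).modNat = a.modNat - b.modNat := by
  rw [eq_sub_iff_add_eq, ← modNat_add, sub_add_cancel]

lemma sum_comp_divNat {M : Type*} [AddCommMonoid M] (f : Fin m → M) :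
    ∑ x : Fin (m * n), f x.divNat = n • ∑ a, f a := by
  have h (a : Fin m) (b : Fin n) : (finProdFinEquiv (a, b)).divNat = a :=
    congrArg Prod.fst (finProdFinEquiv.symm_apply_apply (a, b))
  rw [← finProdFinEquiv.sum_comp, Fintype.sum_prod_type]
  simp [h, Finset.smul_sum]

end Fin

lemma List.prod_ofFn_comp_modNat {M : Type*} [Monoid M] {m n : ℕ} (f : Fin n → M) :
    (List.ofFn fun x : Fin (m * n) => f x.modNat).prod = (List.ofFn f).prod ^ m := by
  have h (i : Fin m) (j : Fin n) (hij) : (⟨i * n + j, hij⟩ : Fin (m * n)).modNat = j := by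
    ext; simp [Fin.modNat, Nat.mul_comm, Nat.mod_eq_of_lt]
  simp [List.ofFn_mul, h, List.prod_flatten, List.ofFn_const]

lemma List.prod_ofFn_mk {M N : Type*} [Monoid M] [Monoid N] {k : ℕ} (f : Fin k → M)
    (g : Fin k → N) :
    (List.ofFn fun i => (f i, g i)).prod = ((List.ofFn f).prod, (List.ofFn g).prod) := by
  ext
  · exact (map_list_prod (MonoidHom.fst M N) _).trans (by rw [List.map_ofFn]; rfl)
  · exact (map_list_prod (MonoidHom.snd M N) _).trans (by rw [List.map_ofFn]; rfl)

open Function Multiplicative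

namespace MagicCayleySudoku

variable {H : Type*} {n : ℕ} [NeZero n]

def cell (e : Fin n ≃ H) (x y : Fin (n * n)) :
    H × H × Multiplicative (ZMod n) × Multiplicative (ZMod n) :=
  (e x.modNat, e y.modNat, ofAdd (ZMod.finEquiv n x.divNat), ofAdd (ZMod.finEquiv n y.divNat))

variable (e : Fin n ≃ H)

lemma bijective_cell : Bijective fun p : Fin (n * n) × Fin (n * n) => cell e p.1 p.2 := by
  let digits : Fin (n * n) ≃ H × Multiplicative (ZMod n) :=
    finProdFinEquiv.symm.trans <| (Equiv.prodComm _ _).trans <|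
      e.prodCongr <| (ZMod.finEquiv n).toEquiv.trans ofAdd
  exact ((digits.prodCongr digits).trans <|
    (Equiv.prodProdProdComm _ _ _ _).trans (Equiv.prodAssoc _ _ _)).bijective

variable [Group H]

lemma cell_mul_cell (x y z w : Fin (n * n)) :
    cell e x y * cell e z w =
      (1, e y.modNat, 1, ofAdd (ZMod.finEquiv n y.divNat)) * cell e x w *
        (e z.modNat, 1, ofAdd (ZMod.finEquiv n z.divNat), 1) := by
  simp [cell]

lemma bijective_cell_mul_cell (y z : Fin (n * n)) :
    Bijective fun p : Fin (n * n) × Fin (n * n) => cell e p.1 y * cell e z p.2 := by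
  simp only [cell_mul_cell]
  exact (Equiv.mulRight _).bijective.comp ((Equiv.mulLeft _).bijective.comp (bijective_cell e))

structure IsBalanced (u : Fin (n * n) → Fin (n * n)) : Prop where
  exists_modNat_eq : ∃ F : Fin n → Fin n, ∀ ℓ, (u ℓ).modNat = F ℓ.modNat
  sum_divNat_eq_zero : ∑ ℓ, ZMod.finEquiv n (u ℓ).divNat = 0

lemma isBalanced_const (j : Fin (n * n)) : IsBalanced fun _ => j where
  exists_modNat_eq := ⟨fun _ => j.modNat, fun _ => rfl⟩
  sum_divNat_eq_zero := by simp

lemma IsBalanced.of_bijective {u : Fin (n * n) → Fin (n * n)} (hu : Bijective u)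
    (F : Fin n → Fin n) (hF : ∀ ℓ, (u ℓ).modNat = F ℓ.modNat) : IsBalanced u where
  exists_modNat_eq := ⟨F, hF⟩
  sum_divNat_eq_zero := by
    rw [hu.sum_comp (fun x => ZMod.finEquiv n x.divNat), Fin.sum_comp_divNat]
    simp

lemma isBalanced_id : IsBalanced (id : Fin (n * n) → Fin (n * n)) :=
  .of_bijective bijective_id id fun _ => rfl

lemma isBalanced_add_left (j : Fin (n * n)) : IsBalanced (j + ·) :=
  .of_bijective (Equiv.addLeft j).bijective (j.modNat + ·) fun ℓ => Fin.modNat_add j ℓ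

lemma isBalanced_sub_left (j : Fin (n * n)) : IsBalanced (j - ·) :=
  .of_bijective (Equiv.subLeft j).bijective (j.modNat - ·) fun ℓ => Fin.modNat_sub j ℓ

lemma prod_ofFn_cell_mul_cell {u v : Fin (n * n) → Fin (n * n)} (hu : IsBalanced u)
    (hv : IsBalanced v) (y z : Fin (n * n)) :
    (List.ofFn fun ℓ => cell e (u ℓ) y * cell e z (v ℓ)).prod = 1 := by
  obtain ⟨F, hF⟩ := hu.exists_modNat_eq
  obtain ⟨F', hF'⟩ := hv.exists_modNat_eq
  have periodic (f : Fin n → H) : (List.ofFn fun ℓ : Fin (n * n) => f ℓ.modNat).prod = 1 := by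
    have h := pow_card_eq_one' (x := (List.ofFn f).prod)
    rwa [Nat.card_eq_of_equiv_fin e.symm, ← List.prod_ofFn_comp_modNat] at h
  have zero_sum (a : Fin (n * n) → ZMod n) (ha : ∑ ℓ, a ℓ = 0) :
      (List.ofFn fun ℓ => ofAdd (a ℓ)).prod = 1 := by
    rw [List.prod_ofFn, ← ofAdd_sum, ha, ofAdd_zero]
  simp only [cell, Prod.mk_mul_mk, List.prod_ofFn_mk, hF, hF', ← ofAdd_add]
  refine Prod.ext (periodic fun r => e (F r) * e z.modNat) <|
    Prod.ext (periodic fun r => e y.modNat * e (F' r)) <| Prod.ext (zero_sum _ ?_) (zero_sum _ ?_)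
  · simp [Finset.sum_add_distrib, hu.sum_divNat_eq_zero]
  · simp [Finset.sum_add_distrib, hv.sum_divNat_eq_zero]

end MagicCayleySudoku

open MagicCayleySudoku

/-- Application (Arbitrary Groups): every finite group `H` embeds into the group
`G = H × H × ℤₙ × ℤₙ` (with `n = |H|`), which admits a pandiagonal magic
Cayley-sudoku table with `k = n²`. -/
theorem arbitrary_group_embeds_in_magic_group {H : Type*} [Group H] [Fintype H]
    (n k : ℕ) (hn : Fintype.card H = n) (hk : k = n ^ 2) :
    ∃ K : Subgroup (H × H × Multiplicative (ZMod n) × Multiplicative (ZMod n)),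
      Nonempty (H ≃* K) ∧
    ∃ ρ γ : Fin k × Fin k → H × H × Multiplicative (ZMod n) × Multiplicative (ZMod n),
      Function.Bijective ρ ∧ Function.Bijective γ ∧
      ∀ m i : Fin k,
        Function.Bijective (fun p : Fin k × Fin k => ρ (m, p.1) * γ (i, p.2)) ∧
        ∀ j : Fin k,
          (List.ofFn fun ℓ : Fin k => ρ (m, j) * γ (i, ℓ)).prod = 1 ∧
          (List.ofFn fun ℓ : Fin k => ρ (m, ℓ) * γ (i, j)).prod = 1 ∧
          (List.ofFn fun ℓ : Fin k => ρ (m, ℓ) * γ (i, j + ℓ)).prod = 1 ∧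
          (List.ofFn fun ℓ : Fin k => ρ (m, ℓ) * γ (i, j - ℓ)).prod = 1 := by
  obtain rfl : k = n * n := hk.trans (sq n)
  have : NeZero n := ⟨hn ▸ Fintype.card_ne_zero⟩
  let e : Fin n ≃ H := (Fintype.equivFinOfCardEq hn).symm
  refine ⟨(MonoidHom.inl _ _).range, ⟨MonoidHom.ofInjective fun _ _ h => congrArg Prod.fst h⟩,
    fun p => cell e p.2 p.1, fun p => cell e p.1 p.2,
    (bijective_cell e).comp (Equiv.prodComm _ _).bijective, bijective_cell e,
    fun m i => ⟨bijective_cell_mul_cell e m i, fun j => ?_⟩⟩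
  exact ⟨prod_ofFn_cell_mul_cell e (isBalanced_const j) isBalanced_id m i,
    prod_ofFn_cell_mul_cell e isBalanced_id (isBalanced_const j) m i,
    prod_ofFn_cell_mul_cell e isBalanced_id (isBalanced_add_left j) m i,
    prod_ofFn_cell_mul_cell e isBalanced_id (isBalanced_sub_left j) m i⟩
end

section
/- Let E be a group, let a, b ∈ E, and let z ∈ Z(E) satisfy a·b = b·a·z. Then for all integers n, i, m ≥ 0, the ordered product ∏_{ℓ=0}^{n} (b^{ℓ+i}·a^m) equals ( ∏_{ℓ=0}^{n} b^{ℓ+i} ) · (a^m)^{n+1} · ∏_{ℓ=0}^{n} (z^m)^{ℓ(ℓ+i)}. -/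
/-! Because the commutator `z` is central, `a ^ M * b ^ k = b ^ k * a ^ M * z ^ (M * k)`.
In `∏ (c ℓ * A)` with `c ℓ = b ^ (ℓ + i)` and `A = a ^ m`, the block `A ^ ℓ` accumulated to
the left of `c ℓ` is moved past it, leaving the central correction `(z ^ m) ^ (ℓ * (ℓ + i))`. -/

open Subgroup

section CentralCommutator

variable {G : Type*} [Group G] {x y w : G}

theorem mul_pow_eq_pow_mul_mul_pow_of_mul_eq (hw : w ∈ center G) (h : x * y = y * x * w)
    (k : ℕ) : x * y ^ k = y ^ k * x * w ^ k := by
  induction k with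
  | zero => simp
  | succ k ih =>
    calc x * y ^ (k + 1) = y ^ k * x * (w ^ k * y) := by rw [pow_succ, ← mul_assoc, ih]; group
      _ = y ^ k * (x * y) * w ^ k := by rw [← mem_center_iff.mp (pow_mem hw k) y]; group
      _ = y ^ (k + 1) * x * w ^ (k + 1) := by rw [h]; group

theorem pow_mul_pow_eq_pow_mul_pow_mul_pow_of_mul_eq (hw : w ∈ center G) (h : x * y = y * x * w)
    (m k : ℕ) : x ^ m * y ^ k = y ^ k * x ^ m * w ^ (m * k) := by
  induction m with
  | zero => simp
  | succ m ih =>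
    calc x ^ (m + 1) * y ^ k = x * y ^ k * x ^ m * w ^ (m * k) := by
          rw [pow_succ', mul_assoc, ih]; group
      _ = y ^ k * x ^ (m + 1) * w ^ ((m + 1) * k) := by
        rw [mul_pow_eq_pow_mul_mul_pow_of_mul_eq hw h, mul_assoc (y ^ k * x),
          ← mem_center_iff.mp (pow_mem hw k) (x ^ m)]
        group

theorem list_prod_ofFn_mul_eq_of_pow_mul_eq {n : ℕ} (A : G) (c w : Fin n → G)
    (hw : ∀ ℓ, w ℓ ∈ center G) (hc : ∀ ℓ : Fin n, A ^ (ℓ : ℕ) * c ℓ = c ℓ * A ^ (ℓ : ℕ) * w ℓ) :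
    (List.ofFn fun ℓ => c ℓ * A).prod = (List.ofFn c).prod * A ^ n * (List.ofFn w).prod := by
  induction n with
  | zero => simp
  | succ n ih =>
    have hW : (List.ofFn fun ℓ : Fin n => w ℓ.castSucc).prod ∈ center G :=
      list_prod_mem (by simp [List.mem_ofFn, hw])
    simp only [List.ofFn_succ', List.prod_concat]
    rw [ih _ _ (fun ℓ => hw _) (fun ℓ => by simpa using hc ℓ.castSucc)]
    have hlast : A ^ n * c (Fin.last n) = c (Fin.last n) * A ^ n * w (Fin.last n) := by
      simpa using hc (Fin.last n)
    set P := (List.ofFn fun ℓ : Fin n => c ℓ.castSucc).prod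
    set W := (List.ofFn fun ℓ : Fin n => w ℓ.castSucc).prod
    calc _ = P * (A ^ n * c (Fin.last n)) * A * W := by
          rw [mul_assoc _ W, ← mem_center_iff.mp hW]; group
      _ = P * c (Fin.last n) * A ^ n * (w (Fin.last n) * A) * W := by rw [hlast]; group
      _ = _ := by
        rw [← mem_center_iff.mp (hw _) A, ← mem_center_iff.mp hW (w _)]; group

end CentralCommutator

/-- Step 6 of the p-groups application: a product formula for
`∏_{ℓ=0}^{n} b ^ (ℓ + i) * a ^ m`. -/
theorem prod_pow_formula {E : Type*} [Group E] (a b z : E)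
    (hz : z ∈ Subgroup.center E) (hab : a * b = b * a * z) (n i m : ℕ) :
    (List.ofFn fun ℓ : Fin (n + 1) => b ^ ((ℓ : ℕ) + i) * a ^ m).prod =
      (List.ofFn fun ℓ : Fin (n + 1) => b ^ ((ℓ : ℕ) + i)).prod * (a ^ m) ^ (n + 1) *
        (List.ofFn fun ℓ : Fin (n + 1) => (z ^ m) ^ ((ℓ : ℕ) * ((ℓ : ℕ) + i))).prod := by
  refine list_prod_ofFn_mul_eq_of_pow_mul_eq _ _ _ (fun ℓ => pow_mem (pow_mem hz m) _) fun ℓ => ?_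
  rw [← pow_mul, ← pow_mul, ← mul_assoc]
  exact pow_mul_pow_eq_pow_mul_pow_mul_pow_of_mul_eq hz hab _ _
end

section
/- Let p be an odd prime and E a group. Suppose a, b ∈ E and z ∈ Z(E) satisfy a·b = b·a·z, z has order p, b^p = 1, and either a^p = 1 or a^p = z. Then for all integers i, j ≥ 0, the ordered double product ∏_{k=0}^{p−1} ( ∏_{ℓ=0}^{p−1} (b^ℓ·a^k)·(b^i·a^j) ) equals 1, where the inner product is taken in increasing order of ℓ and the outer product in increasing order of k. -/
/-!
Since `z` is central, products of elements `b ^ m * a ^ n * z ^ r` multiply like in a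
Heisenberg group: `(m, n, r) * (m', n', r') = (m + m', n + n', r + r' + n * m')`. For fixed `k`
the inner product is thus `b ^ (∑ (ℓ + i)) * a ^ (p * (k + j)) * z ^ (⋯)`. As `p` is odd it divides
`∑_{ℓ < p} (ℓ + i)`, so the `b`-part vanishes, `a ^ p` is a power of `z`, and the inner product is
`w ^ (k + j)` for one element `w` with `w ^ p = 1`. The outer product is then
`w ^ (∑_{k < p} (k + j)) = 1`, by oddness of `p` once more.
-/

open Finset

theorem List.prod_ofFn_pow {M : Type*} [Monoid M] (x : M) {n : ℕ} (f : Fin n → ℕ) :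
    (List.ofFn fun k => x ^ f k).prod = x ^ ∑ k, f k := by
  induction n with
  | zero => simp
  | succ n ih => rw [List.ofFn_succ, List.prod_cons, ih, Fin.sum_univ_succ, pow_add]

theorem Odd.dvd_sum_range_add {p : ℕ} (hp : Odd p) (n : ℕ) : p ∣ ∑ k ∈ range p, (k + n) := by
  obtain ⟨t, rfl⟩ := hp
  rw [sum_add_distrib, sum_range_id, sum_const, card_range, smul_eq_mul, Nat.add_sub_cancel,
    mul_comm _ (2 * t), mul_assoc, Nat.mul_div_cancel_left _ two_pos]
  exact dvd_add (dvd_mul_left _ _) (dvd_mul_right _ _)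

section

variable {G : Type*} [Group G] {a b z : G}

theorem semiconjBy_pow_of_mul_eq (hz : z ∈ Subgroup.center G) (hab : a * b = b * a * z)
    (n : ℕ) : SemiconjBy (a ^ n) b (b * z ^ n) := by
  have hzc : ∀ x : G, Commute x z := fun x => Subgroup.mem_center_iff.1 hz x
  have hconj : SemiconjBy a b (b * z) := by
    rw [SemiconjBy, hab, mul_assoc, mul_assoc, (hzc a).eq]
  induction n with
  | zero => simp [SemiconjBy]
  | succ n ih =>
    rw [pow_succ, pow_succ, ← mul_assoc]
    exact (ih.mul_right (hzc _)).mul_left hconj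

theorem pow_mul_pow_eq_of_mul_eq (hz : z ∈ Subgroup.center G) (hab : a * b = b * a * z)
    (n m : ℕ) : a ^ n * b ^ m = b ^ m * a ^ n * z ^ (n * m) := by
  have hzc : ∀ (r : ℕ) (x : G), Commute x (z ^ r) := fun r x =>
    Subgroup.mem_center_iff.1 (pow_mem hz r) x
  rw [((semiconjBy_pow_of_mul_eq hz hab n).pow_right m).eq, (hzc n b).mul_pow, ← pow_mul,
    mul_assoc, ((hzc _ _).symm.eq : z ^ _ * a ^ n = _), mul_assoc]

namespace CentralCommutator

variable (a b z) in
def normalForm (m n r : ℕ) : G := b ^ m * a ^ n * z ^ r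

theorem normalForm_zero_right (m n : ℕ) : normalForm a b z m n 0 = b ^ m * a ^ n := by
  rw [normalForm, pow_zero, mul_one]

theorem normalForm_mul (hz : z ∈ Subgroup.center G) (hab : a * b = b * a * z)
    (m n r m' n' r' : ℕ) :
    normalForm a b z m n r * normalForm a b z m' n' r' =
      normalForm a b z (m + m') (n + n') (r + r' + n * m') := by
  have hzc : ∀ (r : ℕ) (x : G), Commute x (z ^ r) := fun r x =>
    Subgroup.mem_center_iff.1 (pow_mem hz r) x
  calc normalForm a b z m n r * normalForm a b z m' n' r'
      = b ^ m * (a ^ n * b ^ m') * a ^ n' * (z ^ r * z ^ r') := by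
        simp only [normalForm, mul_assoc, (hzc r _).symm.eq]
    _ = normalForm a b z (m + m') (n + n') (r + r' + n * m') := by
        rw [pow_mul_pow_eq_of_mul_eq hz hab]
        simp only [normalForm, mul_assoc, pow_add, (hzc (n * m') _).symm.eq]

theorem prod_ofFn_normalForm (hz : z ∈ Subgroup.center G) (hab : a * b = b * a * z)
    (f : ℕ → ℕ) (n r N : ℕ) :
    (List.ofFn fun ℓ : Fin N => normalForm a b z (f ℓ) n r).prod =
      normalForm a b z (∑ ℓ ∈ range N, f ℓ) (N * n) (N * r + n * ∑ ℓ ∈ range N, ℓ * f ℓ) := by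
  induction N with
  | zero => simp [normalForm]
  | succ N ih =>
    rw [List.ofFn_succ', List.concat_eq_append, List.prod_append, List.prod_singleton]
    simp only [Fin.val_castSucc, Fin.val_last]
    rw [ih, normalForm_mul hz hab, sum_range_succ, sum_range_succ]
    congr 1 <;> ring

end CentralCommutator

open CentralCommutator in
theorem prod_ofFn_pow_mul_pow_mul_eq_pow {p ε : ℕ} (hz : z ∈ Subgroup.center G)
    (hab : a * b = b * a * z) (hodd : Odd p) (hb : b ^ p = 1) (hzp : z ^ p = 1)
    (hap : a ^ p = z ^ ε) (i j k : ℕ) :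
    (List.ofFn fun ℓ : Fin p => b ^ (ℓ : ℕ) * a ^ k * (b ^ i * a ^ j)).prod =
      (z ^ (ε + ∑ ℓ ∈ range p, ℓ * (ℓ + i))) ^ (k + j) := by
  simp_rw [← normalForm_zero_right (z := z), normalForm_mul hz hab, zero_add]
  rw [prod_ofFn_normalForm hz hab (· + i), normalForm]
  obtain ⟨c, hc⟩ := hodd.dvd_sum_range_add i
  have hb_sum : b ^ (∑ ℓ ∈ range p, (ℓ + i)) = 1 := by rw [hc, pow_mul, hb, one_pow]
  have ha_pow : a ^ (p * (k + j)) = z ^ (ε * (k + j)) := by rw [pow_mul, hap, ← pow_mul]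
  rw [hb_sum, one_mul, ha_pow, pow_add z (p * _), pow_mul z p, hzp, one_pow, one_mul, ← pow_add,
    ← pow_mul]
  congr 1
  ring

end

theorem double_product_pgroup_general {E : Type*} [Group E] (p : ℕ)
    (hodd : Odd p) (a b z : E) (hz : z ∈ Subgroup.center E)
    (hab : a * b = b * a * z) (hzord : orderOf z = p) (hb : b ^ p = 1)
    (ha : a ^ p = 1 ∨ a ^ p = z) (i j : ℕ) :
    (List.ofFn fun k : Fin p =>
      (List.ofFn fun ℓ : Fin p =>
        (b ^ (ℓ : ℕ) * a ^ (k : ℕ)) * (b ^ i * a ^ j)).prod).prod = 1 := by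
  have hzp : z ^ p = 1 := hzord ▸ pow_orderOf_eq_one z
  obtain ⟨ε, hap⟩ : ∃ ε, a ^ p = z ^ ε :=
    ha.elim (fun h => ⟨0, h.trans (pow_zero z).symm⟩) (fun h => ⟨1, h.trans (pow_one z).symm⟩)
  simp_rw [prod_ofFn_pow_mul_pow_mul_eq_pow hz hab hodd hb hzp hap i j]
  rw [List.prod_ofFn_pow, Fin.sum_univ_eq_sum_range (· + j)]
  obtain ⟨c, hc⟩ := hodd.dvd_sum_range_add j
  rw [hc, ← pow_mul, mul_comm, pow_mul, pow_mul, hzp, one_pow, one_pow]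

/-- Step 7 of the p-groups application: the double product
`∏_{k=0}^{p-1} ∏_{ℓ=0}^{p-1} (b ^ ℓ * a ^ k) * (b ^ i * a ^ j)` is trivial. -/
theorem double_product_pgroup {E : Type*} [Group E] (p : ℕ) (hp : p.Prime)
    (hodd : Odd p) (a b z : E) (hz : z ∈ Subgroup.center E)
    (hab : a * b = b * a * z) (hzord : orderOf z = p) (hb : b ^ p = 1)
    (ha : a ^ p = 1 ∨ a ^ p = z) (i j : ℕ) :
    (List.ofFn fun k : Fin p =>
      (List.ofFn fun ℓ : Fin p =>
        (b ^ (ℓ : ℕ) * a ^ (k : ℕ)) * (b ^ i * a ^ j)).prod).prod = 1 :=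
  double_product_pgroup_general p hodd a b z hz hab hzord hb ha i j
end
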